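/- The Borel conjecture for strong measure zero sets is equivalent to the Borel conjecture for Rothberger sets: every strong measure zero set of reals is countable if and only if every set of reals with the Rothberger property C'' is countable. -/

import Mathlib

/-!
Every Rothberger set has strong measure zero: select from the covers by intervals of length
`< ε n`. Conversely assume every Rothberger set is countable.

If every family of `ℵ₁` functions `ℕ → ℕ` is eventually bounded (`𝔟 > ω₁`), a strong measure
zero set `Y` of size `ℵ₁` is Rothberger: record for each `y` how small a ball around `y` the
`n`-th cover must contain, bound these `ℵ₁` functions by a single `g`, and cover `Y` infinitely
often by intervals of length `< 1 / (g n + 1)`.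

If some family of size `ℵ₁` is unbounded (`𝔟 = ω₁`), enumerating it along `ω₁` yields an
uncountable family `S` whose eventually bounded parts are all countable. Code `ℕ → ℕ` injectively
into `ℝ` by ternary expansions with gaps `f n`: an open set containing all codes of finite
sequences misses only codes of pointwise bounded functions. So the codes of `S` together with
the codes of finite sequences form an uncountable set concentrated on a countable one, which is
Rothberger.
-/

/-- X ⊆ ℝ has strong measure zero: for every sequence of positive reals ε_n there are
intervals I_n of length < ε_n covering X. -/
def SMZ (X : Set ℝ) : Prop :=
  ∀ ε : ℕ → ℝ, (∀ n, 0 < ε n) →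
    ∃ I : ℕ → Set ℝ, (∀ n, ∃ a b : ℝ, I n = Set.Ioo a b ∧ b - a < ε n) ∧ X ⊆ ⋃ n, I n

/-- X ⊆ ℝ has the Rothberger property C''. -/
def Rothberger (X : Set ℝ) : Prop :=
  ∀ 𝒰 : ℕ → Set (Set ℝ), (∀ n, (∀ U ∈ 𝒰 n, IsOpen U) ∧ X ⊆ ⋃₀ 𝒰 n) →
    ∃ U : ℕ → Set ℝ, (∀ n, U n ∈ 𝒰 n) ∧ X ⊆ ⋃ n, U n

open Set Filter Cardinal

theorem exists_selection_of_countable {α : Type*} {C : Set α} {𝒰 : ℕ → Set (Set α)}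
    (hC : C.Countable) (hne : ∀ n, (𝒰 n).Nonempty) (hcov : ∀ n, C ⊆ ⋃₀ 𝒰 n) :
    ∃ U : ℕ → Set α, (∀ n, U n ∈ 𝒰 n) ∧ C ⊆ ⋃ n, U n := by
  rcases C.eq_empty_or_nonempty with rfl | hCne
  · choose U hU using hne
    exact ⟨U, hU, empty_subset _⟩
  obtain ⟨x, rfl⟩ := hC.exists_eq_range hCne
  choose U hU hxU using fun n => hcov n (mem_range_self n)
  exact ⟨U, hU, range_subset_iff.2 fun n => mem_iUnion.2 ⟨n, hxU n⟩⟩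

/-- The even-indexed covers catch `D` together with an open neighbourhood of it, the
odd-indexed ones the countable rest. -/
theorem rothberger_of_concentrated {X D : Set ℝ} (hD : D.Countable) (hDne : D.Nonempty)
    (hDX : D ⊆ X) (hconc : ∀ U, IsOpen U → D ⊆ U → (X \ U).Countable) : Rothberger X := by
  intro 𝒰 h𝒰
  have hne : ∀ n, (𝒰 n).Nonempty := fun n =>
    let ⟨U, hU, _⟩ := (h𝒰 n).2 (hDX hDne.some_mem)
    ⟨U, hU⟩
  let e := Equiv.natSumNatEquivNat
  obtain ⟨V, hV, hDV⟩ := exists_selection_of_countable hD (fun n => hne (e (.inl n)))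
    fun n => hDX.trans (h𝒰 _).2
  obtain ⟨W, hW, hXW⟩ := exists_selection_of_countable
    (hconc _ (isOpen_iUnion fun n => (h𝒰 _).1 _ (hV n)) hDV) (fun n => hne (e (.inr n)))
    fun n => sdiff_subset.trans (h𝒰 _).2
  refine ⟨fun n => Sum.elim V W (e.symm n), fun n => ?_, fun x hx => ?_⟩
  · obtain ⟨s, rfl⟩ := e.surjective n
    cases s <;> simp [hV, hW]
  · by_cases hxV : x ∈ ⋃ n, V n
    · obtain ⟨n, hn⟩ := mem_iUnion.1 hxV
      exact mem_iUnion.2 ⟨e (.inl n), by simpa using hn⟩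
    · obtain ⟨n, hn⟩ := mem_iUnion.1 (hXW ⟨hx, hxV⟩)
      exact mem_iUnion.2 ⟨e (.inr n), by simpa using hn⟩

theorem Rothberger.smz {X : Set ℝ} (hX : Rothberger X) : SMZ X := by
  intro ε hε
  refine hX (fun n => {I | ∃ a b : ℝ, I = Ioo a b ∧ b - a < ε n}) fun n => ⟨?_, fun x _ => ?_⟩
  · rintro _ ⟨a, b, rfl, -⟩
    exact isOpen_Ioo
  · have := hε n
    exact ⟨Ioo (x - ε n / 3) (x + ε n / 3), ⟨_, _, rfl, by linarith⟩,
      by constructor <;> linarith⟩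

theorem SMZ.mono {X Y : Set ℝ} (hX : SMZ X) (hYX : Y ⊆ X) : SMZ Y := fun ε hε =>
  let ⟨I, hI, hXI⟩ := hX ε hε
  ⟨I, hI, hYX.trans hXI⟩

theorem SMZ.exists_frequently_mem {X : Set ℝ} (hX : SMZ X) {ε : ℕ → ℝ} (hε : ∀ n, 0 < ε n) :
    ∃ I : ℕ → Set ℝ, (∀ n, ∃ a b : ℝ, I n = Ioo a b ∧ b - a < ε n) ∧
      ∀ x ∈ X, ∃ᶠ n in atTop, x ∈ I n := by
  -- Reindexed along `Nat.pair`, the covers of `X` occur once in every block `j`.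
  choose J hJ hXJ using fun j => hX (fun i => ε (Nat.pair j i)) fun i => hε _
  refine ⟨fun n => J n.unpair.1 n.unpair.2, fun n => by simpa using hJ n.unpair.1 n.unpair.2,
    fun x hx => frequently_atTop.2 fun N => ?_⟩
  obtain ⟨i, hi⟩ := mem_iUnion.1 (hXJ N hx)
  exact ⟨Nat.pair N i, Nat.left_le_pair N i, by simpa using hi⟩

theorem Real.Ioo_subset_ball_of_mem {a b y r : ℝ} (hy : y ∈ Ioo a b) (hab : b - a ≤ r) :
    Ioo a b ⊆ Metric.ball y r := by
  rw [Real.ball_eq_Ioo]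
  exact Ioo_subset_Ioo (by linarith [hy.2]) (by linarith [hy.1])

def IsEventuallyBounded (F : Set (ℕ → ℕ)) : Prop :=
  ∃ g : ℕ → ℕ, ∀ f ∈ F, f ≤ᶠ[atTop] g

theorem Set.Countable.isEventuallyBounded {F : Set (ℕ → ℕ)} (hF : F.Countable) :
    IsEventuallyBounded F := by
  rcases F.eq_empty_or_nonempty with rfl | hne
  · exact ⟨id, by simp⟩
  obtain ⟨u, rfl⟩ := hF.exists_eq_range hne
  refine ⟨fun n => (Finset.range (n + 1)).sup fun i => u i n, ?_⟩
  rintro _ ⟨i, rfl⟩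
  filter_upwards [eventually_ge_atTop i] with n hn
  exact Finset.le_sup (f := fun j => u j n) (Finset.mem_range.2 (Nat.lt_succ_of_le hn))

theorem rothberger_of_smz_of_mk_le_aleph_one
    (hb : ∀ F : Set (ℕ → ℕ), #F ≤ ℵ₁ → IsEventuallyBounded F) {Y : Set ℝ} (hY : SMZ Y)
    (hYc : #Y ≤ ℵ₁) (hYne : Y.Nonempty) : Rothberger Y := by
  intro 𝒰 h𝒰
  have hball : ∀ (y : Y) (n : ℕ), ∃ k : ℕ, ∃ V ∈ 𝒰 n, Metric.ball (y : ℝ) (1 / (k + 1)) ⊆ V := by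
    intro y n
    obtain ⟨V, hV, hyV⟩ := (h𝒰 n).2 y.2
    obtain ⟨δ, hδ, hδV⟩ := Metric.isOpen_iff.1 ((h𝒰 n).1 V hV) y hyV
    obtain ⟨k, hk⟩ := exists_nat_one_div_lt hδ
    exact ⟨k, V, hV, (Metric.ball_subset_ball hk.le).trans hδV⟩
  choose k V hV hkV using hball
  obtain ⟨g, hg⟩ := hb (range k) (mk_range_le.trans hYc)
  obtain ⟨I, hI, hYI⟩ :=
    hY.exists_frequently_mem (ε := fun n => 1 / (g n + 1)) fun n => by positivity
  have hU : ∀ n, ∃ U ∈ 𝒰 n, (∃ V ∈ 𝒰 n, I n ⊆ V) → I n ⊆ U := by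
    intro n
    by_cases h : ∃ V ∈ 𝒰 n, I n ⊆ V
    · obtain ⟨V, hV, hIV⟩ := h
      exact ⟨V, hV, fun _ => hIV⟩
    · obtain ⟨V, hV, -⟩ := (h𝒰 n).2 hYne.some_mem
      exact ⟨V, hV, fun h' => absurd h' h⟩
  choose U hU hIU using hU
  refine ⟨U, hU, fun y hy => ?_⟩
  -- `k y n ≤ g n` eventually and `y ∈ I n` frequently; at such an `n`, `I n` lies in a ball
  -- contained in a member of `𝒰 n`.
  obtain ⟨n, hyn, hkn⟩ := ((hYI y hy).and_eventually (hg _ (mem_range_self ⟨y, hy⟩))).exists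
  obtain ⟨a, b, hIab, hab⟩ := hI n
  rw [hIab] at hyn
  have hIV : I n ⊆ V ⟨y, hy⟩ n := by
    rw [hIab]
    exact (Real.Ioo_subset_ball_of_mem hyn (hab.le.trans (Nat.one_div_le_one_div hkn))).trans
      (hkV ⟨y, hy⟩ n)
  exact mem_iUnion.2 ⟨n, hIU n ⟨_, hV _ n, hIV⟩ (hIab ▸ hyn)⟩

theorem exists_not_countable_forall_countable_bounded {F : Set (ℕ → ℕ)} (hF : #F ≤ ℵ₁)
    (hunb : ¬ IsEventuallyBounded F) :
    ∃ S : Set (ℕ → ℕ), ¬ S.Countable ∧ ∀ g : ℕ → ℕ, {f ∈ S | f ≤ᶠ[atTop] g}.Countable := by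
  obtain ⟨e⟩ : Nonempty (F ↪ (ℵ₁ : Cardinal).ord.ToType) := by
    rwa [← Cardinal.le_def, mk_toType, card_ord]
  have hseg : ∀ f : F, (e ⁻¹' Iic (e f)).Countable := fun f => by
    refine Countable.preimage ?_ e.injective
    rw [← Iio_insert]
    have hIio : #(Iio (e f)) < ℵ₁ := by simpa using mk_Iio_lt (e f)
    exact (le_aleph0_iff_set_countable.1 (lt_aleph_one_iff.1 hIio)).insert _
  -- `c f` dominates every member of `F` enumerated no later than `f`.
  choose c hc using fun f : F => ((hseg f).image Subtype.val).isEventuallyBounded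
  have hunb' : ∀ g, ∃ f : F, ¬ (f : ℕ → ℕ) ≤ᶠ[atTop] g := by
    simpa [IsEventuallyBounded] using hunb
  refine ⟨range c, fun hS => ?_, fun g => ?_⟩
  · obtain ⟨g, hg⟩ := hS.isEventuallyBounded
    obtain ⟨f, hf⟩ := hunb' g
    exact hf ((hc f f ⟨f, show e f ≤ e f from le_rfl, rfl⟩).trans (hg _ (mem_range_self f)))
  · obtain ⟨f₀, hf₀⟩ := hunb' g
    refine ((hseg f₀).image c).mono ?_
    rintro _ ⟨⟨f, rfl⟩, hfg⟩
    have hf : e f < e f₀ := not_le.1 fun h => hf₀ ((hc f _ ⟨f₀, h, rfl⟩).trans hfg)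
    exact ⟨f, show e f ≤ e f₀ from hf.le, rfl⟩

def boundedTree (h : List ℕ → ℕ) : ℕ → Finset (List ℕ)
  | 0 => {[]}
  | m + 1 => (boundedTree h m).biUnion fun t => (Finset.range (h t)).image t.concat

theorem ofFn_mem_boundedTree {h : List ℕ → ℕ} {f : ℕ → ℕ}
    (hf : ∀ m, f m < h (List.ofFn fun i : Fin m => f i)) (m : ℕ) :
    (List.ofFn fun i : Fin m => f i) ∈ boundedTree h m := by
  induction m with
  | zero => simp [boundedTree]
  | succ m ih =>
    simp only [boundedTree, Finset.mem_biUnion, Finset.mem_image, Finset.mem_range]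
    exact ⟨_, ih, f m, hf m, by rw [List.ofFn_succ_last]; simp⟩

/-- A quantitative form of König's lemma for finitely branching trees. -/
theorem exists_forall_lt_of_forall_lt_ofFn (h : List ℕ → ℕ) :
    ∃ g : ℕ → ℕ, ∀ f : ℕ → ℕ, (∀ m, f m < h (List.ofFn fun i : Fin m => f i)) → ∀ m, f m < g m :=
  ⟨fun m => (boundedTree h m).sup h, fun _ hf m =>
    (hf m).trans_le (Finset.le_sup (ofFn_mem_boundedTree hf m))⟩

noncomputable section

namespace BaireCode

/-- The ternary digits of `code f` are `1` exactly at the positions `gapSum f (n + 1)`, so that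
consecutive ones are separated by `f n` zeros. -/
def gapSum (f : ℕ → ℕ) (m : ℕ) : ℕ := ∑ k ∈ Finset.range m, (f k + 1)

def term (f : ℕ → ℕ) (n : ℕ) : ℝ := (3 : ℝ)⁻¹ ^ gapSum f (n + 1)

def code (f : ℕ → ℕ) : ℝ := ∑' n, term f n

def partialCode (f : ℕ → ℕ) (m : ℕ) : ℝ := ∑ n ∈ Finset.range m, term f n

def listCode (t : List ℕ) : ℝ := partialCode (fun i => t.getD i 0) t.length

theorem gapSum_succ (f : ℕ → ℕ) (m : ℕ) : gapSum f (m + 1) = gapSum f m + f m + 1 := by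
  rw [gapSum, Finset.sum_range_succ, ← add_assoc]
  rfl

theorem gapSum_add_le (f : ℕ → ℕ) (m n : ℕ) : gapSum f m + n ≤ gapSum f (m + n) := by
  induction n with
  | zero => rfl
  | succ n ih =>
    rw [show m + (n + 1) = m + n + 1 from rfl, gapSum_succ]
    omega

theorem gapSum_congr {f g : ℕ → ℕ} {m : ℕ} (h : ∀ k < m, f k = g k) :
    gapSum f m = gapSum g m :=
  Finset.sum_congr rfl fun k hk => by rw [h k (Finset.mem_range.1 hk)]

theorem partialCode_congr {f g : ℕ → ℕ} {m : ℕ} (h : ∀ k < m, f k = g k) :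
    partialCode f m = partialCode g m :=
  Finset.sum_congr rfl fun n hn => by
    rw [term, term, gapSum_congr fun k hk => h k (by simp at hn; omega)]

theorem term_pos (f : ℕ → ℕ) (n : ℕ) : 0 < term f n := by
  unfold term
  positivity

theorem summable_term (f : ℕ → ℕ) : Summable (term f) := by
  refine .of_nonneg_of_le (fun n => (term_pos f n).le)
    (fun n => pow_le_pow_of_le_one (by norm_num) (by norm_num) ?_)
    (summable_geometric_of_lt_one (by norm_num) (by norm_num : (3 : ℝ)⁻¹ < 1))
  calc n ≤ gapSum f 0 + (n + 1) := by omega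
    _ ≤ gapSum f (n + 1) := by simpa using gapSum_add_le f 0 (n + 1)

theorem partialCode_add_tsum (f : ℕ → ℕ) (m : ℕ) :
    partialCode f m + ∑' n, term f (n + m) = code f :=
  (summable_term f).sum_add_tsum_nat_add m

theorem term_le_tsum (f : ℕ → ℕ) (m : ℕ) : term f m ≤ ∑' n, term f (n + m) := by
  simpa using ((summable_term f).comp_injective (add_left_injective m)).le_tsum 0
    fun n _ => (term_pos f (n + m)).le

theorem tsum_term_add_le (f : ℕ → ℕ) (m : ℕ) :
    ∑' n, term f (n + m) ≤ 3 / 2 * (3 : ℝ)⁻¹ ^ gapSum f (m + 1) := by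
  have hgeom := tsum_geometric_of_lt_one (by norm_num : (0 : ℝ) ≤ 3⁻¹) (by norm_num)
  calc ∑' n, term f (n + m) ≤ ∑' n, (3 : ℝ)⁻¹ ^ gapSum f (m + 1) * (3 : ℝ)⁻¹ ^ n := by
        refine ((summable_term f).comp_injective (add_left_injective m)).tsum_le_tsum
          (fun n => ?_) ((summable_geometric_of_lt_one (by norm_num) (by norm_num)).mul_left _)
        rw [← pow_add, term, show n + m + 1 = m + 1 + n by omega]
        exact pow_le_pow_of_le_one (by norm_num) (by norm_num) (gapSum_add_le f (m + 1) n)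
    _ = 3 / 2 * (3 : ℝ)⁻¹ ^ gapSum f (m + 1) := by
        rw [tsum_mul_left, hgeom]
        ring

theorem code_strictAnti : StrictAnti fun f : Lex (ℕ → ℕ) => code (ofLex f) := by
  rintro f g ⟨m, hfg, hm⟩
  have hP : partialCode (ofLex f) m = partialCode (ofLex g) m := partialCode_congr hfg
  show code (ofLex g) < code (ofLex f)
  rw [← partialCode_add_tsum (ofLex f) m, ← partialCode_add_tsum (ofLex g) m, hP]
  gcongr
  have hgap : gapSum (ofLex f) (m + 1) + 1 ≤ gapSum (ofLex g) (m + 1) := by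
    have hS : gapSum (ofLex f) m = gapSum (ofLex g) m := gapSum_congr hfg
    have hm' : ofLex f m < ofLex g m := hm
    rw [gapSum_succ, gapSum_succ, hS]
    omega
  calc ∑' n, term (ofLex g) (n + m)
        ≤ 3 / 2 * (3 : ℝ)⁻¹ ^ gapSum (ofLex g) (m + 1) := tsum_term_add_le _ m
    _ ≤ 3 / 2 * (3 : ℝ)⁻¹ ^ (gapSum (ofLex f) (m + 1) + 1) :=
        mul_le_mul_of_nonneg_left (pow_le_pow_of_le_one (by norm_num) (by norm_num) hgap)
          (by norm_num)
    _ = term (ofLex f) m / 2 := by rw [term, pow_succ]; ring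
    _ < term (ofLex f) m := half_lt_self (term_pos _ m)
    _ ≤ ∑' n, term (ofLex f) (n + m) := term_le_tsum _ m

theorem code_injective : Function.Injective code := fun _ _ h =>
  toLex.injective (code_strictAnti.injective h)

theorem dist_code_partialCode_le (f : ℕ → ℕ) (m : ℕ) :
    dist (code f) (partialCode f m) ≤ (3 : ℝ)⁻¹ ^ f m := by
  rw [Real.dist_eq, ← partialCode_add_tsum f m, add_sub_cancel_left,
    abs_of_pos ((term_pos f m).trans_le (term_le_tsum f m))]
  calc ∑' n, term f (n + m) ≤ 3 / 2 * (3 : ℝ)⁻¹ ^ gapSum f (m + 1) := tsum_term_add_le f m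
    _ ≤ 3 / 2 * (3 : ℝ)⁻¹ ^ (f m + 1) :=
        mul_le_mul_of_nonneg_left (pow_le_pow_of_le_one (by norm_num) (by norm_num)
          (by rw [gapSum_succ]; omega)) (by norm_num)
    _ ≤ (3 : ℝ)⁻¹ ^ f m := by
        rw [pow_succ]
        nlinarith [pow_pos (by norm_num : (0 : ℝ) < 3⁻¹) (f m)]

theorem listCode_ofFn (f : ℕ → ℕ) (m : ℕ) :
    listCode (List.ofFn fun i : Fin m => f i) = partialCode f m := by
  rw [listCode, List.length_ofFn]
  exact partialCode_congr fun k hk => by simp [hk]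

/-- If `f m` is large, `code f` is close to `listCode` of the prefix of `f` of length `m`. -/
theorem exists_forall_lt_of_code_not_mem {U : Set ℝ} (hU : IsOpen U) (hD : range listCode ⊆ U) :
    ∃ g : ℕ → ℕ, ∀ f, code f ∉ U → ∀ m, f m < g m := by
  have hball : ∀ t, ∃ k : ℕ, Metric.ball (listCode t) ((3 : ℝ)⁻¹ ^ k) ⊆ U := fun t => by
    obtain ⟨ε, hε, hεU⟩ := Metric.isOpen_iff.1 hU _ (hD (mem_range_self t))
    obtain ⟨k, hk⟩ := exists_pow_lt_of_lt_one hε (by norm_num : (3 : ℝ)⁻¹ < 1)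
    exact ⟨k, (Metric.ball_subset_ball hk.le).trans hεU⟩
  choose k hk using hball
  obtain ⟨g, hg⟩ := exists_forall_lt_of_forall_lt_ofFn fun t => k t + 1
  refine ⟨g, fun f hf => hg f fun m => Nat.lt_succ_of_le (not_lt.1 fun hlt =>
    hf (hk (List.ofFn fun i : Fin m => f i) ?_))⟩
  rw [Metric.mem_ball, listCode_ofFn]
  exact (dist_code_partialCode_le f m).trans_lt
    (pow_lt_pow_right_of_lt_one₀ (by norm_num) (by norm_num) hlt)

end BaireCode

end

open BaireCode in
theorem exists_not_countable_rothberger {F : Set (ℕ → ℕ)} (hF : #F ≤ ℵ₁)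
    (hunb : ¬ IsEventuallyBounded F) : ∃ X : Set ℝ, ¬ X.Countable ∧ Rothberger X := by
  obtain ⟨S, hS, hSbdd⟩ := exists_not_countable_forall_countable_bounded hF hunb
  refine ⟨range listCode ∪ code '' S, fun h => hS ?_,
    rothberger_of_concentrated (countable_range _) (range_nonempty _) subset_union_left
      fun U hU hDU => ?_⟩
  · exact countable_of_injective_of_countable_image code_injective.injOn
      (h.mono subset_union_right)
  · obtain ⟨g, hg⟩ := exists_forall_lt_of_code_not_mem hU hDU
    refine ((hSbdd g).image code).mono ?_
    rintro _ ⟨hx | ⟨f, hf, rfl⟩, hxU⟩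
    · exact absurd (hDU hx) hxU
    · exact ⟨f, ⟨hf, .of_forall fun m => (hg f hxU m).le⟩, rfl⟩

/-- The Borel conjecture for strong measure zero sets is equivalent to the Borel
conjecture for Rothberger sets. -/
theorem stmt9 :
    (∀ X : Set ℝ, SMZ X → X.Countable) ↔ (∀ X : Set ℝ, Rothberger X → X.Countable) := by
  refine ⟨fun h X hX => h X hX.smz, fun h X hX => ?_⟩
  by_contra hXc
  by_cases hb : ∀ F : Set (ℕ → ℕ), #F ≤ ℵ₁ → IsEventuallyBounded F
  · obtain ⟨Y, hYX, hY⟩ : ∃ Y ⊆ X, #Y = ℵ₁ :=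
      le_mk_iff_exists_subset.1 <|
        aleph_one_le_iff.2 (not_le.1 (mt le_aleph0_iff_set_countable.1 hXc))
    have hYc : ¬ Y.Countable := by
      rw [← le_aleph0_iff_set_countable, hY]
      exact not_le.2 aleph0_lt_aleph_one
    have hYne : Y.Nonempty := nonempty_iff_ne_empty.2 fun h0 => hYc (h0 ▸ countable_empty)
    exact hYc (h Y (rothberger_of_smz_of_mk_le_aleph_one hb (hX.mono hYX) hY.le hYne))
  · push Not at hb
    obtain ⟨F, hF, hunb⟩ := hb
    obtain ⟨Z, hZ, hZR⟩ := exists_not_countable_rothberger hF hunb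
    exact hZ (h Z hZR)
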